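/- Let 1 ≤ k < n, κ_1 < … < κ_n real, c_1, …, c_n real, A a totally nonnegative real k×n matrix of rank k, and let w_1(x), …, w_k(x) be the Darboux coefficients and p(ζ, x) = ζ^k − Σ_{s=1}^k w_s(x) ζ^{k−s} the Sato characteristic polynomial. Then for all real ζ and x, τ(x)·p(ζ, x) = Σ_I Δ_I(A) · Π_{i_1<i_2, i_1,i_2∈I} (κ_{i_2} − κ_{i_1}) · Π_{i∈I} (ζ − κ_i) · e^{Σ_{i∈I} (κ_i x + c_i)}, where the sum is over all k-element subsets I of {1,…,n}. -/

import Mathlib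

/-!
Border the Wronskian matrix `(f_i^{(l)}(x))`, `0 ≤ l ≤ k`, by the row `(1, ζ, …, ζ^k)` on top.
The Darboux relations reduce its last column to `(p(ζ,x), 0, …, 0)`, so the bordered
determinant is `(-1)^k p(ζ,x) τ(x)`. On the other hand its lower rows are
`∑_j A_ij e^{κ_j x + c_j} (κ_j^l)_l`, so the Cauchy–Binet formula, applied to the alternating
map "determinant with first row `(ζ^l)_l`", expands it over `k`-subsets `I` as
`Δ_I(A) e^{∑_I (κ_i x + c_i)}` times the Vandermonde determinant of `(ζ, κ_I)`, which is
`(-1)^k Π_{i₁<i₂} (κ_{i₂} - κ_{i₁}) Π_I (ζ - κ_i)`.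
-/

open scoped BigOperators

/-- The `k × k` maximal minor of a real `k × n` matrix `A` on the set of columns `I`
(defined to be `0` when `I` does not have exactly `k` elements). -/
noncomputable def maxMinor {k n : ℕ} (A : Matrix (Fin k) (Fin n) ℝ)
    (I : Finset (Fin n)) : ℝ :=
  if h : I.card = k then
    (A.submatrix id fun j => ((I.orderIsoOfFin h) j : Fin n)).det
  else 0

/-- The Vandermonde-type product `Π_{i₁ < i₂, i₁,i₂ ∈ I} (κ i₂ - κ i₁)`. -/
noncomputable def vandProd {n : ℕ} (κ : Fin n → ℝ) (I : Finset (Fin n)) : ℝ :=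
  ∏ p ∈ (I ×ˢ I).filter fun p => p.1 < p.2, (κ p.2 - κ p.1)

open Finset

lemma Finset.prod_orderEmbOfFin {M : Type*} [CommMonoid M] {n m : ℕ} (I : Finset (Fin n))
    (hI : I.card = m) (g : Fin n → M) : ∏ l, g (I.orderEmbOfFin hI l) = ∏ i ∈ I, g i := by
  conv_rhs => rw [← map_orderEmbOfFin_univ I hI, prod_map]
  rfl

lemma maxMinor_of_card_eq {k n : ℕ} (A : Matrix (Fin k) (Fin n) ℝ) {I : Finset (Fin n)}
    (hI : I.card = k) : maxMinor A I = (A.submatrix id (I.orderEmbOfFin hI)).det := by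
  simp only [maxMinor, dif_pos hI, coe_orderIsoOfFin_apply]

lemma maxMinor_of_mul_col {k n : ℕ} (A : Matrix (Fin k) (Fin n) ℝ) (d : Fin n → ℝ)
    (I : Finset (Fin n)) :
    maxMinor (Matrix.of fun i j => A i j * d j) I = (∏ j ∈ I, d j) * maxMinor A I := by
  by_cases hI : I.card = k
  · rw [maxMinor_of_card_eq _ hI, maxMinor_of_card_eq _ hI, ← prod_orderEmbOfFin I hI,
      ← Matrix.det_mul_row]
    congr 1
    ext i l
    simp [mul_comm]
  · simp [maxMinor, hI]

lemma Finset.sum_image_eq_sum_perm_orderEmbOfFin {N : Type*} [AddCommMonoid N] {m n : ℕ}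
    (g : (Fin m → Fin n) → N) {J : Finset (Fin n)} (hJ : J.card = m) :
    ∑ r ∈ univ.filter (fun r : Fin m → Fin n => Function.Injective r ∧ univ.image r = J), g r =
      ∑ σ : Equiv.Perm (Fin m), g (J.orderEmbOfFin hJ ∘ σ) := by
  symm
  refine sum_bij (fun σ _ => J.orderEmbOfFin hJ ∘ σ) (fun σ _ => ?_) (fun σ _ τ _ h => ?_)
    (fun r hr => ?_) (fun _ _ => rfl)
  · simp only [mem_filter, mem_univ, true_and]
    refine ⟨(J.orderEmbOfFin hJ).injective.comp σ.injective, ?_⟩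
    rw [← image_image, image_univ_equiv]
    simp
  · exact Equiv.ext fun i => (J.orderEmbOfFin hJ).injective (congrFun h i)
  · simp only [mem_filter, mem_univ, true_and] at hr
    obtain ⟨hinj, himage⟩ := hr
    have hsorted : r ∘ Tuple.sort r = J.orderEmbOfFin hJ :=
      orderEmbOfFin_unique hJ (fun i => himage ▸ mem_image_of_mem r (mem_univ _))
        ((Tuple.monotone_sort r).strictMono_of_injective (hinj.comp (Tuple.sort r).injective))
    refine ⟨(Tuple.sort r).symm, mem_univ _, ?_⟩
    rw [← hsorted, Function.comp_assoc, Equiv.self_comp_symm, Function.comp_id]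

lemma Fintype.sum_eq_sum_powersetCard_sum_perm {N : Type*} [AddCommMonoid N] {m n : ℕ}
    (g : (Fin m → Fin n) → N) (hg : ∀ r, ¬ Function.Injective r → g r = 0) :
    ∑ r, g r = ∑ J ∈ (powersetCard m univ).attach, ∑ σ : Equiv.Perm (Fin m),
      g (J.1.orderEmbOfFin (mem_powersetCard_univ.mp J.2) ∘ σ) := by
  have hmaps : ∀ r ∈ univ.filter (fun r : Fin m → Fin n => Function.Injective r),
      univ.image r ∈ powersetCard m univ := fun r hr => by
    simp only [mem_filter, mem_univ, true_and] at hr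
    simp [card_image_of_injective _ hr]
  rw [← sum_filter_of_ne (p := Function.Injective) fun r _ h => by_contra fun hr => h (hg r hr),
    ← sum_fiberwise_of_maps_to hmaps, ← sum_attach]
  refine Finset.sum_congr rfl fun J _ => ?_
  rw [filter_filter]
  exact sum_image_eq_sum_perm_orderEmbOfFin g _

theorem AlternatingMap.map_sum_smul_eq_sum_maxMinor_smul {M N : Type*} [AddCommGroup M]
    [Module ℝ M] [AddCommGroup N] [Module ℝ N] {m n : ℕ} (φ : M [⋀^Fin m]→ₗ[ℝ] N)
    (B : Matrix (Fin m) (Fin n) ℝ) (v : Fin n → M) :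
    φ (fun i => ∑ j, B i j • v j) = ∑ J ∈ (powersetCard m univ).attach,
      maxMinor B J • φ (v ∘ J.1.orderEmbOfFin (mem_powersetCard_univ.mp J.2)) := by
  have hexpand : φ (fun i => ∑ j, B i j • v j) = ∑ r, (∏ i, B i (r i)) • φ (v ∘ r) :=
    (φ.toMultilinearMap.map_sum _).trans (Finset.sum_congr rfl fun r _ => φ.map_smul_univ _ _)
  rw [hexpand, Fintype.sum_eq_sum_powersetCard_sum_perm _ fun r hr =>
    by rw [φ.map_eq_zero_of_not_injective _ fun h => hr h.of_comp, smul_zero]]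
  refine Finset.sum_congr rfl fun J _ => ?_
  rw [maxMinor_of_card_eq _ (mem_powersetCard_univ.mp J.2), ← Matrix.det_transpose,
    Matrix.det_apply', Finset.sum_smul]
  refine Finset.sum_congr rfl fun σ _ => ?_
  rw [← Function.comp_assoc, φ.map_perm, Units.smul_def, ← Int.cast_smul_eq_zsmul ℝ, smul_smul,
    mul_comm]
  rfl

lemma Matrix.det_vandermonde_cons {R : Type*} [CommRing R] {m : ℕ} (a : R) (v : Fin m → R) :
    (vandermonde (Fin.cons a v)).det = (∏ i, (v i - a)) * (vandermonde v).det := by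
  simp only [det_vandermonde, Fin.prod_univ_succ, Fin.prod_Ioi_zero, Fin.prod_Ioi_succ,
    Fin.cons_zero, Fin.cons_succ]

lemma vandProd_eq_det_vandermonde {n m : ℕ} (κ : Fin n → ℝ) (I : Finset (Fin n))
    (hI : I.card = m) :
    vandProd κ I = (Matrix.vandermonde (κ ∘ I.orderEmbOfFin hI)).det := by
  set e := I.orderEmbOfFin hI
  have hpairs : (I ×ˢ I).filter (fun p => p.1 < p.2) =
      ((univ ×ˢ univ).filter (fun p : Fin m × Fin m => p.1 < p.2)).map
        (e.toEmbedding.prodMap e.toEmbedding) := by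
    rw [← map_orderEmbOfFin_univ I hI, ← prodMap_map_product, filter_map]
    simp [Function.comp_def, e]
  rw [vandProd, hpairs, prod_map, univ_product_univ, prod_filter, Fintype.prod_prod_type,
    Matrix.det_vandermonde]
  refine prod_congr rfl fun i _ => ?_
  rw [← prod_filter, filter_lt_eq_Ioi]
  rfl

lemma det_cons_pow_comp_orderEmbOfFin {n m : ℕ} (κ : Fin n → ℝ) (ζ : ℝ) (I : Finset (Fin n))
    (hI : I.card = m) :
    (Matrix.of (Fin.cons (fun l : Fin (m + 1) => ζ ^ (l : ℕ))
      fun i l => κ (I.orderEmbOfFin hI i) ^ (l : ℕ))).det =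
        (-1) ^ m * vandProd κ I * ∏ i ∈ I, (ζ - κ i) := by
  have hvand : Matrix.of (Fin.cons (fun l : Fin (m + 1) => ζ ^ (l : ℕ))
      fun i l => κ (I.orderEmbOfFin hI i) ^ (l : ℕ)) =
        Matrix.vandermonde (Fin.cons ζ (κ ∘ I.orderEmbOfFin hI)) := by
    ext i l
    refine Fin.cases ?_ (fun i => ?_) i <;> simp [Matrix.vandermonde_apply]
  rw [hvand, Matrix.det_vandermonde_cons, ← vandProd_eq_det_vandermonde, ← prod_orderEmbOfFin I hI]
  simp only [Function.comp_apply, ← neg_sub ζ, Finset.prod_neg, Finset.card_univ, Fintype.card_fin]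
  ring

lemma Matrix.det_eq_of_col_last_eq_sum_add_single {R : Type*} [CommRing R] {m : ℕ}
    (M : Matrix (Fin (m + 1)) (Fin (m + 1)) R) (a : Fin m → R) (p : R)
    (h : ∀ i, M i (Fin.last m) = ∑ t, a t * M i t.castSucc + (Pi.single 0 p : Fin (m + 1) → R) i) :
    M.det = (-1) ^ m * p * (M.submatrix Fin.succ Fin.castSucc).det := by
  set N := M.updateCol (Fin.last m) (Pi.single 0 p)
  have hM : M = N.updateCol (Fin.last m)
      (fun i => ∑ l, (Fin.snoc a 1 : Fin (m + 1) → R) l • N i l) := by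
    ext i l
    by_cases hl : l = Fin.last m
    · subst hl
      simp [N, Fin.sum_univ_castSucc, h, (Fin.castSucc_lt_last _).ne]
    · simp [N, hl]
  have hdet : M.det = N.det := by
    conv_lhs => rw [hM]
    rw [det_updateCol_sum, Fin.snoc_last, one_smul]
  have hminor : N.submatrix Fin.succ Fin.castSucc = M.submatrix Fin.succ Fin.castSucc := by
    ext i l
    simp [N, (Fin.castSucc_lt_last l).ne]
  rw [hdet, det_succ_column N (Fin.last m), Fin.sum_univ_succ,
    Finset.sum_eq_zero fun i _ => by simp [N]]
  simp [N, hminor]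

lemma Matrix.det_cons_pow_eq_mul_det_of_recurrence {R : Type*} [CommRing R] {k : ℕ}
    (W : Fin k → ℕ → R) (w : Fin k → R) (ζ : R)
    (hW : ∀ i, W i k = ∑ s, w s * W i (k - 1 - (s : ℕ))) :
    (Matrix.of (Fin.cons (fun l : Fin (k + 1) => ζ ^ (l : ℕ))
      fun i (l : Fin (k + 1)) => W i l)).det =
      (-1) ^ k * (ζ ^ k - ∑ s, w s * ζ ^ (k - 1 - (s : ℕ))) *
        (Matrix.of fun i (l : Fin k) => W i l).det := by
  have hrev : ∀ g : Fin k → R, ∑ t, w t.rev * g t = ∑ s, w s * g s.rev := fun g =>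
    Fintype.sum_equiv Fin.revPerm _ _ fun t => by simp
  refine det_eq_of_col_last_eq_sum_add_single _ (fun t => w t.rev) _ fun i => ?_
  refine Fin.cases ?_ (fun i => ?_) i
  · simp [hrev, Nat.sub_sub, Nat.add_comm _ 1]
  · simp [hrev, hW, Nat.sub_sub, Nat.add_comm _ 1]

lemma iteratedDeriv_sum_mul_exp {ι : Type*} [Fintype ι] (a κ c : ι → ℝ) (l : ℕ) :
    iteratedDeriv l (fun x => ∑ j, a j * Real.exp (κ j * x + c j)) =
      fun x => ∑ j, a j * κ j ^ l * Real.exp (κ j * x + c j) := by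
  induction l with
  | zero => simp
  | succ l ih =>
    rw [iteratedDeriv_succ, ih]
    funext x
    refine (HasDerivAt.fun_sum fun j _ =>
      (((hasDerivAt_id x).const_mul (κ j)).add_const (c j)).exp.const_mul _).deriv.trans ?_
    refine sum_congr rfl fun j _ => ?_
    simp only [id, mul_one]
    ring

theorem tau_mul_sato_char_poly_eq_sum_minors_general
    (k n : ℕ)
    (κ c : Fin n → ℝ)
    (A : Matrix (Fin k) (Fin n) ℝ)
    (f : Fin k → ℝ → ℝ)
    (hf : ∀ i x, f i x = ∑ j, A i j * Real.exp (κ j * x + c j))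
    (τ : ℝ → ℝ)
    (hτ : ∀ x, τ x =
      Matrix.det (Matrix.of fun i l : Fin k => iteratedDeriv (l : ℕ) (f i) x))
    (w : Fin k → ℝ → ℝ)
    (hw : ∀ x i, iteratedDeriv k (f i) x =
      ∑ s : Fin k, w s x * iteratedDeriv (k - 1 - (s : ℕ)) (f i) x)
    (ζ x : ℝ) :
    τ x * (ζ ^ k - ∑ s : Fin k, w s x * ζ ^ (k - 1 - (s : ℕ))) =
      ∑ I ∈ Finset.powersetCard k (Finset.univ : Finset (Fin n)),
        maxMinor A I * vandProd κ I * (∏ i ∈ I, (ζ - κ i)) *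
          Real.exp (∑ i ∈ I, (κ i * x + c i)) := by
  set P := ζ ^ k - ∑ s : Fin k, w s x * ζ ^ (k - 1 - (s : ℕ))
  set V : Fin n → Fin (k + 1) → ℝ := fun j l => κ j ^ (l : ℕ)
  have hsign : ((-1 : ℝ) ^ k) * (-1) ^ k = 1 := by rw [← mul_pow]; norm_num
  have hrows : (fun i (l : Fin (k + 1)) => iteratedDeriv l (f i) x) =
      fun i => ∑ j, (A i j * Real.exp (κ j * x + c j)) • V j := by
    funext i l
    simp only [V, funext (hf i), iteratedDeriv_sum_mul_exp, Finset.sum_apply, Pi.smul_apply,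
      smul_eq_mul]
    exact sum_congr rfl fun j _ => by ring
  calc τ x * P = (-1) ^ k *
        (Matrix.of (Fin.cons (fun l : Fin (k + 1) => ζ ^ (l : ℕ))
          fun i (l : Fin (k + 1)) => iteratedDeriv l (f i) x)).det := by
        rw [Matrix.det_cons_pow_eq_mul_det_of_recurrence (fun i l => iteratedDeriv l (f i) x)
          (fun s => w s x) ζ (hw x), ← hτ]
        linear_combination (-(P * τ x)) * hsign
    _ = (-1) ^ k * ∑ J ∈ (powersetCard k univ).attach,
          maxMinor (Matrix.of fun i j => A i j * Real.exp (κ j * x + c j)) J *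
            (Matrix.of (Fin.cons (fun l : Fin (k + 1) => ζ ^ (l : ℕ)) fun i l =>
              κ (J.1.orderEmbOfFin (mem_powersetCard_univ.mp J.2) i) ^ (l : ℕ))).det := by
        rw [hrows]
        exact congrArg _ (AlternatingMap.map_sum_smul_eq_sum_maxMinor_smul
          (Matrix.detRowAlternating.curryLeft fun l => ζ ^ (l : ℕ)) _ V)
    _ = _ := by
        conv_rhs => rw [← sum_attach]
        rw [mul_sum]
        refine sum_congr rfl fun ⟨J, hJ⟩ _ => ?_
        rw [maxMinor_of_mul_col, det_cons_pow_comp_orderEmbOfFin, Real.exp_sum]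
        linear_combination (maxMinor A J * vandProd κ J * (∏ i ∈ J, (ζ - κ i)) *
          ∏ i ∈ J, Real.exp (κ i * x + c i)) * hsign

/-- for TNN soliton data with Darboux coefficients `w` and Sato
characteristic polynomial `p(ζ,x) = ζ^k - Σ_s w_s(x) ζ^{k-s}`, one has
`τ(x)·p(ζ,x) = Σ_I Δ_I(A) · Π_{i₁<i₂∈I}(κ_{i₂}-κ_{i₁}) · Π_{i∈I}(ζ-κ_i) ·
e^{Σ_{i∈I}(κ_i x + c_i)}` over all `k`-element column subsets `I`. -/
theorem tau_mul_sato_char_poly_eq_sum_minors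
    (k n : ℕ) (hk : 1 ≤ k) (hkn : k < n)
    (κ c : Fin n → ℝ) (hκ : StrictMono κ)
    (A : Matrix (Fin k) (Fin n) ℝ) (hrank : A.rank = k)
    (hTNN : ∀ I : Finset (Fin n), I.card = k → 0 ≤ maxMinor A I)
    (f : Fin k → ℝ → ℝ)
    (hf : ∀ i x, f i x = ∑ j, A i j * Real.exp (κ j * x + c j))
    (τ : ℝ → ℝ)
    (hτ : ∀ x, τ x =
      Matrix.det (Matrix.of fun i l : Fin k => iteratedDeriv (l : ℕ) (f i) x))
    (w : Fin k → ℝ → ℝ)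
    (hw : ∀ x i, iteratedDeriv k (f i) x =
      ∑ s : Fin k, w s x * iteratedDeriv (k - 1 - (s : ℕ)) (f i) x)
    (ζ x : ℝ) :
    τ x * (ζ ^ k - ∑ s : Fin k, w s x * ζ ^ (k - 1 - (s : ℕ))) =
      ∑ I ∈ Finset.powersetCard k (Finset.univ : Finset (Fin n)),
        maxMinor A I * vandProd κ I * (∏ i ∈ I, (ζ - κ i)) *
          Real.exp (∑ i ∈ I, (κ i * x + c i)) :=
  tau_mul_sato_char_poly_eq_sum_minors_general k n κ c A f hf τ hτ w hw ζ x
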